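/- Let X ~ Bin(m, θ) with upper tail B̄_θ(k) = P(X ≥ k). If k ≤ mθ, then B̄_θ(k) ≥ 1 - Φ((k - mθ)/√(mθ)), where Φ is the standard normal cdf. -/

import Mathlib

open MeasureTheory

/-- standard normal density -/
noncomputable def gaussPDF (x : ℝ) : ℝ := (Real.sqrt (2 * Real.pi))⁻¹ * Real.exp (-x ^ 2 / 2)

/-- standard normal upper tail (so 1 - Φ(z) = gaussTail z) -/
noncomputable def gaussTail (x : ℝ) : ℝ := ∫ t in Set.Ioi x, gaussPDF t

lemma gaussPDF_nonneg (x : ℝ) : 0 ≤ gaussPDF x := by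
  unfold gaussPDF; positivity

lemma continuous_gaussPDF : Continuous gaussPDF := by
  unfold gaussPDF; fun_prop

lemma integrable_gaussPDF : Integrable gaussPDF := by
  have h : Integrable (fun x : ℝ => Real.exp (-(1/2) * x ^ 2)) :=
    integrable_exp_neg_mul_sq (by norm_num)
  have := h.const_mul (Real.sqrt (2 * Real.pi))⁻¹
  refine this.congr ?_
  filter_upwards with x
  unfold gaussPDF
  ring_nf

lemma integral_gaussPDF : ∫ x, gaussPDF x = 1 := by
  unfold gaussPDF
  rw [integral_const_mul]
  have : (fun x : ℝ => Real.exp (-x ^ 2 / 2)) = fun x : ℝ => Real.exp (-(1/2) * x ^ 2) := by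
    funext x; ring_nf
  rw [this, integral_gaussian]
  have h2 : Real.pi / (1/2) = 2 * Real.pi := by ring
  rw [h2]
  have : Real.sqrt (2 * Real.pi) ≠ 0 := by positivity
  field_simp

lemma gaussTail_nonneg (y : ℝ) : 0 ≤ gaussTail y :=
  setIntegral_nonneg measurableSet_Ioi (fun x _ => gaussPDF_nonneg x)

lemma gaussTail_neg (s : ℝ) : gaussTail (-s) = 1 - gaussTail s := by
  have h1 : gaussTail (-s) = ∫ x in Set.Iic s, gaussPDF x := by
    have := integral_comp_neg_Ioi (-s) gaussPDF
    simp only [neg_neg] at this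
    rw [← this]
    unfold gaussTail
    congr 1
    funext x
    unfold gaussPDF
    rw [neg_pow]
    norm_num
  have h2 : (∫ x in Set.Iic s, gaussPDF x) + ∫ x in Set.Ioi s, gaussPDF x = 1 := by
    rw [intervalIntegral.integral_Iic_add_Ioi integrable_gaussPDF.integrableOn
      integrable_gaussPDF.integrableOn, integral_gaussPDF]
  rw [h1]
  unfold gaussTail
  linarith [h2]

lemma gaussTail_le_one (y : ℝ) : gaussTail y ≤ 1 := by
  have := gaussTail_neg (-y)
  have h2 := gaussTail_nonneg (-y)
  rw [neg_neg] at this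
  linarith

lemma gaussTail_split (a b : ℝ) (hab : a ≤ b) :
    gaussTail a = (∫ t in a..b, gaussPDF t) + gaussTail b := by
  rw [intervalIntegral.integral_of_le hab]
  unfold gaussTail
  rw [← MeasureTheory.setIntegral_union (Set.Ioc_disjoint_Ioi le_rfl) measurableSet_Ioi
    integrable_gaussPDF.integrableOn integrable_gaussPDF.integrableOn,
    Set.Ioc_union_Ioi_eq_Ioi hab]

lemma hasDerivAt_gaussTail (y : ℝ) : HasDerivAt gaussTail (-gaussPDF y) y := by
  have key : ∀ z : ℝ, gaussTail z = gaussTail 0 - ∫ t in (0:ℝ)..z, gaussPDF t := by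
    intro z
    rcases le_total z 0 with h | h
    · rw [gaussTail_split z 0 h, intervalIntegral.integral_symm]
      ring
    · rw [gaussTail_split 0 z h]
      ring
  have hd : HasDerivAt (fun z => gaussTail 0 - ∫ t in (0:ℝ)..z, gaussPDF t) (-gaussPDF y) y := by
    have := (continuous_gaussPDF.integral_hasStrictDerivAt 0 y).hasDerivAt
    exact (this.const_sub (gaussTail 0))
  have : (fun z => gaussTail 0 - ∫ t in (0:ℝ)..z, gaussPDF t) = gaussTail := by
    funext z; rw [key z]
  rwa [this] at hd

/-- helper: monotonicity from derivative on open interval with continuity on closed -/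
lemma mono_helper {f f' : ℝ → ℝ} {a b : ℝ} (hab : a ≤ b)
    (hc : ContinuousOn f (Set.Icc a b))
    (hd : ∀ t ∈ Set.Ioo a b, HasDerivAt f (f' t) t)
    (h0 : ∀ t ∈ Set.Ioo a b, 0 ≤ f' t) : f a ≤ f b := by
  have := monotoneOn_of_deriv_nonneg (convex_Icc a b) hc
    (fun t ht => by
      rw [interior_Icc] at ht
      exact (hd t ht).differentiableAt.differentiableWithinAt)
    (fun t ht => by
      rw [interior_Icc] at ht
      rw [(hd t ht).deriv]
      exact h0 t ht)
  exact this (Set.left_mem_Icc.mpr hab) (Set.right_mem_Icc.mpr hab) hab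

noncomputable def KLf (p x : ℝ) : ℝ :=
  p * (Real.log p - Real.log x) + (1 - p) * (Real.log (1 - p) - Real.log (1 - x))

lemma hasDerivAt_KLf (p : ℝ) {x : ℝ} (hx0 : 0 < x) (hx1 : x < 1) :
    HasDerivAt (KLf p) ((x - p) / (x * (1 - x))) x := by
  have hx : x ≠ 0 := ne_of_gt hx0
  have h1x : (1:ℝ) - x ≠ 0 := by linarith
  have h1 : HasDerivAt (fun y : ℝ => Real.log y) (1 / x) x := by
    simpa using Real.hasDerivAt_log hx
  have h2 : HasDerivAt (fun y : ℝ => 1 - y) (-1) x := by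
    simpa using (hasDerivAt_id x).const_sub 1
  have h3 : HasDerivAt (fun y : ℝ => Real.log (1 - y)) (-(1 / (1 - x))) x := by
    have := (Real.hasDerivAt_log h1x).comp x h2
    convert this using 1
    · rfl
    · rfl
    · rfl
    field_simp
  have h4 : HasDerivAt (fun y : ℝ => p * (Real.log p - Real.log y)) (-(p / x)) x := by
    have := ((hasDerivAt_const x (Real.log p)).fun_sub h1).const_mul p
    convert this using 1
    · rfl
    · rfl
    field_simp; ring
  have h5 : HasDerivAt (fun y : ℝ => (1 - p) * (Real.log (1 - p) - Real.log (1 - y)))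
      ((1 - p) / (1 - x)) x := by
    have := ((hasDerivAt_const x (Real.log (1 - p))).fun_sub h3).const_mul (1 - p)
    convert this using 1
    · rfl
    · rfl
    field_simp; ring
  have := h4.fun_add h5
  convert this using 1
  · rfl
  · rfl
  · rfl
  field_simp
  ring

lemma klf_self (p : ℝ) : KLf p p = 0 := by unfold KLf; ring

lemma klf_continuousOn {p a b : ℝ} (ha : 0 < a) (hb : b < 1) :
    ContinuousOn (KLf p) (Set.Icc a b) := by
  intro t ht
  obtain ⟨h1, h2⟩ := ht
  exact (hasDerivAt_KLf p (lt_of_lt_of_le ha h1) (lt_of_le_of_lt h2 hb)).continuousAt.continuousWithinAt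

lemma klf_lower {p x : ℝ} (hp : 0 < p) (hpx : p ≤ x) (hx1 : x < 1) :
    (x - p) ^ 2 / (2 * x) ≤ KLf p x := by
  rcases eq_or_lt_of_le hpx with h | h
  · rw [← h, klf_self]; simp
  have key : (fun t : ℝ => KLf p t - (t - p) ^ 2 / (2 * t)) p
      ≤ (fun t : ℝ => KLf p t - (t - p) ^ 2 / (2 * t)) x := by
    apply mono_helper (f := fun t : ℝ => KLf p t - (t - p) ^ 2 / (2 * t))
      (f' := fun t => (t - p) / (t * (1 - t)) - (t - p) * (t + p) / (2 * t ^ 2)) hpx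
    · apply ContinuousOn.sub (klf_continuousOn hp hx1)
      apply ContinuousOn.div (by fun_prop) (by fun_prop)
      intro t ht
      have h0 : 0 < t := lt_of_lt_of_le hp ht.1
      exact ne_of_gt (by linarith)
    · intro t ht
      obtain ⟨ht1, ht2⟩ := ht
      have h0 : 0 < t := lt_trans hp ht1
      have h1 : t < 1 := lt_trans ht2 hx1
      have hd1 : HasDerivAt (fun t : ℝ => (t - p) ^ 2 / (2 * t))
          ((t - p) * (t + p) / (2 * t ^ 2)) t := by
        have hnum : HasDerivAt (fun t : ℝ => (t - p) ^ 2) (2 * (t - p)) t := by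
          have := ((hasDerivAt_id t).sub_const p).fun_pow 2
          simpa [mul_comm] using this
        have hden : HasDerivAt (fun t : ℝ => 2 * t) 2 t := by
          simpa using (hasDerivAt_id t).const_mul 2
        have := hnum.fun_div hden (by positivity)
        convert this using 1
        · rfl
        · rfl
        have ht0 : t ≠ 0 := ne_of_gt h0
        field_simp
        ring
      exact (hasDerivAt_KLf p h0 h1).fun_sub hd1
    · intro t ht
      obtain ⟨ht1, ht2⟩ := ht
      have h0 : 0 < t := lt_trans hp ht1
      have h1 : t < 1 := lt_trans ht2 hx1
      have e1 : (t - p) / (t * (1 - t)) - (t - p) * (t + p) / (2 * t ^ 2)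
          = (t - p) * ((t - p) + t ^ 2 + p * t) / (2 * t ^ 2 * (1 - t)) := by
        have : t ≠ 0 := ne_of_gt h0
        have : (1:ℝ) - t ≠ 0 := by linarith
        field_simp
        ring
      rw [e1]
      apply div_nonneg _ (by nlinarith)
      apply mul_nonneg (by linarith)
      nlinarith [hp.le, h0.le, ht1.le]
  simp only [klf_self, sub_self, ne_eq] at key
  simp at key
  linarith [key]

lemma klf_mono {p a b : ℝ} (hp : 0 < p) (hpa : p ≤ a) (hab : a ≤ b) (hb : b < 1) :
    KLf p a ≤ KLf p b := by
  apply mono_helper (f' := fun t => (t - p) / (t * (1 - t))) hab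
    (klf_continuousOn (lt_of_lt_of_le hp hpa) hb)
  · intro t ht
    exact hasDerivAt_KLf p (lt_of_lt_of_le (lt_of_lt_of_le hp hpa) ht.1.le) (lt_trans ht.2 hb)
  · intro t ht
    apply div_nonneg
    · linarith [lt_of_le_of_lt hpa ht.1]
    · have h0 : 0 < t := lt_of_lt_of_le (lt_of_lt_of_le hp hpa) ht.1.le
      have h1 : t < 1 := lt_trans ht.2 hb
      nlinarith

lemma klf_key {p x : ℝ} (hp : 0 < p) (hpx : p ≤ x) (hx1 : x < 1) :
    2 * p * (1 - x) ^ 2 * KLf p x ≤ (1 - p) * (x - p) ^ 2 := by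
  have key : (fun t : ℝ => (1 - p) * (t - p) ^ 2 / (2 * p * (1 - t) ^ 2) - KLf p t) p
      ≤ (fun t : ℝ => (1 - p) * (t - p) ^ 2 / (2 * p * (1 - t) ^ 2) - KLf p t) x := by
    apply mono_helper (f := fun t : ℝ => (1 - p) * (t - p) ^ 2 / (2 * p * (1 - t) ^ 2) - KLf p t)
      (f' := fun t => (1 - p) ^ 2 * (t - p) / (p * (1 - t) ^ 3) - (t - p) / (t * (1 - t))) hpx
    · apply ContinuousOn.sub _ (klf_continuousOn hp hx1)
      apply ContinuousOn.div (by fun_prop) (by fun_prop)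
      intro t ht
      have h2 : t < 1 := lt_of_le_of_lt ht.2 hx1
      have : (0:ℝ) < 1 - t := by linarith
      positivity
    · intro t ht
      obtain ⟨ht1, ht2⟩ := ht
      have h0 : 0 < t := lt_trans hp ht1
      have h1 : t < 1 := lt_trans ht2 hx1
      have h1t : (0:ℝ) < 1 - t := by linarith
      have hfrac : HasDerivAt (fun t : ℝ => (1 - p) * (t - p) ^ 2 / (2 * p * (1 - t) ^ 2))
          ((1 - p) ^ 2 * (t - p) / (p * (1 - t) ^ 3)) t := by
        have hnum : HasDerivAt (fun t : ℝ => (1 - p) * (t - p) ^ 2) ((1 - p) * (2 * (t - p))) t := by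
          have h' : HasDerivAt (fun t : ℝ => (t - p) ^ 2) (2 * (t - p)) t := by
            simpa [mul_comm] using ((hasDerivAt_id t).sub_const p).fun_pow 2
          simpa [mul_comm, mul_assoc] using h'.const_mul (1 - p)
        have hden : HasDerivAt (fun t : ℝ => 2 * p * (1 - t) ^ 2) (-(2 * p * (2 * (1 - t)))) t := by
          have hin : HasDerivAt (fun t : ℝ => 1 - t) (-1) t := by
            simpa using (hasDerivAt_id t).const_sub 1
          have h2 : HasDerivAt (fun t : ℝ => (1 - t) ^ 2) (2 * (1 - t) * (-1)) t := by
            simpa [mul_comm] using hin.fun_pow 2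
          have := h2.const_mul (2 * p)
          convert this using 1
          · rfl
          · rfl
          ring
        have := hnum.fun_div hden (by positivity)
        convert this using 1
        · rfl
        · rfl
        have hpne : p ≠ 0 := ne_of_gt hp
        have h1tne : (1:ℝ) - t ≠ 0 := ne_of_gt h1t
        field_simp
        ring
      exact hfrac.fun_sub (hasDerivAt_KLf p h0 h1)
    · intro t ht
      obtain ⟨ht1, ht2⟩ := ht
      have h0 : 0 < t := lt_trans hp ht1
      have h1 : t < 1 := lt_trans ht2 hx1
      have h1t : (0:ℝ) < 1 - t := by linarith
      have hid : (1 - p) ^ 2 * (t - p) / (p * (1 - t) ^ 3) - (t - p) / (t * (1 - t))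
          = (t - p) ^ 2 * (1 - p * t) / (p * t * (1 - t) ^ 3) := by
        have : p ≠ 0 := ne_of_gt hp
        have : t ≠ 0 := ne_of_gt h0
        have : (1:ℝ) - t ≠ 0 := ne_of_gt h1t
        field_simp
        ring
      rw [hid]
      apply div_nonneg _ (by positivity)
      have hpt : p * t ≤ 1 := by nlinarith [hp.le, h0.le]
      nlinarith [sq_nonneg (t - p)]
  simp only [klf_self, sub_self] at key
  simp at key
  have hden : (0:ℝ) < 2 * p * (1 - x) ^ 2 := by
    have : (0:ℝ) < 1 - x := by linarith
    positivity
  have h2 : KLf p x * (2 * p * (1 - x) ^ 2) ≤ (1 - p) * (x - p) ^ 2 :=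
    (le_div_iff₀ hden).mp key
  nlinarith [h2]

section StirlingPart

open Stirling

lemma sqrt_pi_le_stirlingSeq {n : ℕ} (hn : 1 ≤ n) : Real.sqrt Real.pi ≤ stirlingSeq n := by
  obtain ⟨j, rfl⟩ := Nat.exists_eq_add_of_le hn
  have ht : Filter.Tendsto (stirlingSeq ∘ Nat.succ) Filter.atTop (nhds (Real.sqrt Real.pi)) := by
    apply tendsto_stirlingSeq_sqrt_pi.comp (Filter.tendsto_add_atTop_nat 1)
  have := stirlingSeq'_antitone.le_of_tendsto ht j
  simpa [Nat.succ_eq_add_one, Nat.add_comm] using this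

lemma stirlingSeq_le_of_le {a b : ℕ} (ha : 1 ≤ a) (hab : a ≤ b) :
    stirlingSeq b ≤ stirlingSeq a := by
  obtain ⟨i, rfl⟩ := Nat.exists_eq_add_of_le ha
  obtain ⟨j, rfl⟩ := Nat.exists_eq_add_of_le hab
  have := stirlingSeq'_antitone (Nat.le_add_right i j)
  simpa [Nat.succ_eq_add_one, Nat.add_comm, Nat.add_assoc, Nat.add_left_comm] using this

lemma stirlingSeq_pos {n : ℕ} (hn : 1 ≤ n) : 0 < stirlingSeq n :=
  lt_of_lt_of_le (Real.sqrt_pos.mpr Real.pi_pos) (sqrt_pi_le_stirlingSeq hn)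

lemma factorial_eq_stirling {n : ℕ} (hn : 1 ≤ n) :
    (n.factorial : ℝ) = stirlingSeq n * (Real.sqrt (2 * n) * ((n : ℝ) / Real.exp 1) ^ n) := by
  have hn0 : (0:ℝ) < n := by exact_mod_cast hn
  have hpos : (0:ℝ) < Real.sqrt (2 * n) * ((n : ℝ) / Real.exp 1) ^ n := by positivity
  rw [stirlingSeq]
  field_simp

/-- squared Stirling bound for the central binomial value -/
lemma choose_sq_bound {m k : ℕ} (hk : 1 ≤ k) (hkm : k < m) :
    ((m.choose k : ℝ) * ((k : ℝ) / m) ^ k * (((m - k : ℕ) : ℝ) / m) ^ (m - k)) ^ 2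
      * (2 * Real.pi * k * ((m - k : ℕ) : ℝ)) ≤ m := by
  have hm1 : 1 ≤ m := le_of_lt (lt_of_le_of_lt hk hkm)
  have hmk1 : 1 ≤ m - k := Nat.le_sub_of_add_le (by omega)
  have hk0 : (0:ℝ) < k := by exact_mod_cast hk
  have hm0 : (0:ℝ) < m := by exact_mod_cast hm1
  have hmk0 : (0:ℝ) < ((m - k : ℕ) : ℝ) := by exact_mod_cast hmk1
  have he : (0:ℝ) < Real.exp 1 := Real.exp_pos 1
  -- power cancellation : (m/e)^m * (k/m)^k * ((m-k)/m)^(m-k) = (k/e)^k * ((m-k)/e)^(m-k)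
  have hpow : ((m:ℝ) / Real.exp 1) ^ m * ((k:ℝ) / m) ^ k * (((m - k : ℕ):ℝ) / m) ^ (m - k)
      = ((k:ℝ) / Real.exp 1) ^ k * (((m - k : ℕ):ℝ) / Real.exp 1) ^ (m - k) := by
    have hsplit : ((m:ℝ) / Real.exp 1) ^ m
        = ((m:ℝ) / Real.exp 1) ^ k * ((m:ℝ) / Real.exp 1) ^ (m - k) := by
      rw [← pow_add]
      congr 1
      omega
    rw [hsplit]
    rw [show ((m:ℝ) / Real.exp 1) ^ k * ((m:ℝ) / Real.exp 1) ^ (m - k) * ((k:ℝ) / m) ^ k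
        * (((m - k : ℕ):ℝ) / m) ^ (m - k)
      = (((m:ℝ) / Real.exp 1) * ((k:ℝ) / m)) ^ k
        * (((m:ℝ) / Real.exp 1) * (((m - k : ℕ):ℝ) / m)) ^ (m - k) from by
        rw [mul_pow, mul_pow]; ring]
    congr 2
    · field_simp
    · field_simp
  -- factorial identity
  have hchoose : (m.choose k : ℝ) * (k.factorial : ℝ) * ((m - k).factorial : ℝ) = (m.factorial : ℝ) := by
    exact_mod_cast congrArg (Nat.cast : ℕ → ℝ) (Nat.choose_mul_factorial_mul_factorial hkm.le)
  set sm := stirlingSeq m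
  set sk := stirlingSeq k
  set smk := stirlingSeq (m - k)
  have hsm : 0 < sm := stirlingSeq_pos hm1
  have hsk : 0 < sk := stirlingSeq_pos hk
  have hsmk : 0 < smk := stirlingSeq_pos hmk1
  have hfm := factorial_eq_stirling hm1
  have hfk := factorial_eq_stirling hk
  have hfmk := factorial_eq_stirling hmk1
  -- value of the central term
  have hval : (m.choose k : ℝ) * ((k : ℝ) / m) ^ k * (((m - k : ℕ) : ℝ) / m) ^ (m - k)
      = sm / (sk * smk) * (Real.sqrt (2 * m) / (Real.sqrt (2 * k) * Real.sqrt (2 * ((m - k : ℕ):ℝ)))) := by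
    have hCk : (0:ℝ) < (k.factorial : ℝ) := by exact_mod_cast Nat.factorial_pos k
    have hCmk : (0:ℝ) < ((m - k).factorial : ℝ) := by exact_mod_cast Nat.factorial_pos (m - k)
    have hC : (m.choose k : ℝ) = (m.factorial : ℝ) / ((k.factorial : ℝ) * ((m - k).factorial : ℝ)) := by
      field_simp
      linarith [hchoose]
    rw [hC, hfm, hfk, hfmk]
    have h1 : (0:ℝ) < Real.sqrt (2 * k) := by positivity
    have h2 : (0:ℝ) < Real.sqrt (2 * ((m - k:ℕ):ℝ)) := by positivity
    have h3 : (0:ℝ) < ((k:ℝ) / Real.exp 1) ^ k := by positivity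
    have h4 : (0:ℝ) < (((m - k:ℕ):ℝ) / Real.exp 1) ^ (m - k) := by positivity
    have h5 : (0:ℝ) < ((m:ℝ) / Real.exp 1) ^ m := by positivity
    have hexp : Real.exp (k:ℝ) * Real.exp (((m - k:ℕ)):ℝ) = Real.exp (m:ℝ) := by
      rw [← Real.exp_add]
      congr 1
      push_cast [Nat.cast_sub hkm.le]
      ring
    have hmm : (m:ℝ) ^ k * (m:ℝ) ^ (m - k) = (m:ℝ) ^ m := by
      rw [← pow_add]
      congr 1
      omega
    field_simp
    rw [← hpow, div_eq_iff (mul_pos hsk hsmk).ne']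
    ring
  have hkey : sm * Real.sqrt Real.pi ≤ sk * smk := by
    calc sm * Real.sqrt Real.pi ≤ sk * Real.sqrt Real.pi := by
          apply mul_le_mul_of_nonneg_right (stirlingSeq_le_of_le hk hkm.le) (Real.sqrt_nonneg _)
      _ ≤ sk * smk := by
          apply mul_le_mul_of_nonneg_left (sqrt_pi_le_stirlingSeq hmk1) hsk.le
  have h8 : (sm * Real.sqrt Real.pi) ^ 2 ≤ (sk * smk) ^ 2 := by
    apply pow_le_pow_left₀ (by positivity) hkey
  have key2 : (sm / (sk * smk)) ^ 2 * Real.pi ≤ 1 := by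
    rw [div_pow, div_mul_eq_mul_div, div_le_one (by positivity)]
    calc sm ^ 2 * Real.pi = (sm * Real.sqrt Real.pi) ^ 2 := by
          rw [mul_pow, Real.sq_sqrt Real.pi_pos.le]
      _ ≤ (sk * smk) ^ 2 := h8
    
  rw [hval]
  have hsq : (Real.sqrt (2 * (m:ℝ)) / (Real.sqrt (2 * (k:ℝ)) * Real.sqrt (2 * ((m - k:ℕ):ℝ)))) ^ 2
      = (2 * (m:ℝ)) / ((2 * (k:ℝ)) * (2 * ((m - k:ℕ):ℝ))) := by
    rw [div_pow, mul_pow, Real.sq_sqrt (by positivity), Real.sq_sqrt (by positivity),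
      Real.sq_sqrt (by positivity)]
  have expand : (sm / (sk * smk)
        * (Real.sqrt (2 * (m:ℝ)) / (Real.sqrt (2 * (k:ℝ)) * Real.sqrt (2 * ((m - k:ℕ):ℝ))))) ^ 2
        * (2 * Real.pi * (k:ℝ) * ((m - k:ℕ):ℝ))
      = ((sm / (sk * smk)) ^ 2 * Real.pi) * (m:ℝ) := by
    rw [mul_pow, hsq]
    field_simp
    
  rw [expand]
  nlinarith [key2, hm0, sq_nonneg (sm / (sk * smk))]

end StirlingPart

/-- derivative of the binomial lower tail sum in θ (telescoping) -/
lemma hasDerivAt_binomSum (m : ℕ) : ∀ (k : ℕ), k ≤ m → ∀ (y : ℝ),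
    HasDerivAt (fun y : ℝ => ∑ j ∈ Finset.range k, (m.choose j : ℝ) * y ^ j * (1 - y) ^ (m - j))
      (-((k : ℝ) * (m.choose k : ℝ) * y ^ (k - 1) * (1 - y) ^ (m - k))) y := by
  intro k
  induction k with
  | zero =>
      intro _ y
      simpa using hasDerivAt_const y (0:ℝ)
  | succ n ih =>
      intro hn1 y
      have hnm : n ≤ m := le_of_lt (Nat.lt_of_succ_le hn1)
      have h1 := ih hnm y
      have hterm : HasDerivAt (fun y : ℝ => (m.choose n : ℝ) * y ^ n * (1 - y) ^ (m - n))
          ((m.choose n : ℝ) * ((n : ℝ) * y ^ (n - 1) * (1 - y) ^ (m - n)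
            - ((m - n : ℕ) : ℝ) * y ^ n * (1 - y) ^ (m - n - 1))) y := by
        have hp1 : HasDerivAt (fun y : ℝ => y ^ n) ((n:ℝ) * y ^ (n - 1)) y := by
          simpa using hasDerivAt_pow n y
        have hin : HasDerivAt (fun y : ℝ => 1 - y) (-1) y := by
          simpa using (hasDerivAt_id y).const_sub 1
        have hp2 : HasDerivAt (fun y : ℝ => (1 - y) ^ (m - n))
            (-(((m - n : ℕ):ℝ) * (1 - y) ^ (m - n - 1))) y := by
          have := (hasDerivAt_pow (m - n) (1 - y)).comp y hin
          convert this using 1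
          · rfl
          · rfl
          · rfl
          ring
        have := (hp1.fun_mul hp2).const_mul ((m.choose n : ℝ))
        convert this using 1
        · rfl
        · rfl
        · funext z; ring
        · ring
      have hsum := h1.fun_add hterm
      have : (fun y : ℝ => ∑ j ∈ Finset.range (n + 1), (m.choose j : ℝ) * y ^ j * (1 - y) ^ (m - j))
          = fun y : ℝ => (∑ j ∈ Finset.range n, (m.choose j : ℝ) * y ^ j * (1 - y) ^ (m - j))
            + (m.choose n : ℝ) * y ^ n * (1 - y) ^ (m - n) := by
        funext y
        rw [Finset.sum_range_succ]
      rw [this]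
      convert hsum using 1
      · rfl
      · rfl
      have hid : ((m - n : ℕ) : ℝ) * (m.choose n : ℝ) = ((n + 1 : ℕ) : ℝ) * (m.choose (n+1) : ℝ) := by
        have h2 : m.choose (n+1) * (n+1) = m.choose n * (m - n) := Nat.choose_succ_right_eq m n
        have h3 := congrArg (fun t : ℕ => (t : ℝ)) h2.symm
        push_cast [Nat.cast_sub hnm] at h3 ⊢
        linear_combination h3
      have hnn : n + 1 - 1 = n := rfl
      rw [hnn]
      have hcancel : -(((n+1 : ℕ) : ℝ) * (m.choose (n+1) : ℝ) * y ^ n * (1 - y) ^ (m - (n+1)))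
          = -((m - n : ℕ):ℝ) * (m.choose n : ℝ) * y ^ n * (1 - y) ^ (m - n - 1) := by
        rw [← hid]
        have : m - (n+1) = m - n - 1 := by omega
        rw [this]
        ring
      rw [hcancel]
      ring

lemma binomSum_eq_integral {m k : ℕ} (hk1 : 1 ≤ k) (hkm : k ≤ m) (θ : ℝ) :
    ∑ j ∈ Finset.range k, (m.choose j : ℝ) * θ ^ j * (1 - θ) ^ (m - j)
      = ∫ x in θ..1, (k : ℝ) * (m.choose k : ℝ) * x ^ (k - 1) * (1 - x) ^ (m - k) := by
  have hftc := intervalIntegral.integral_eq_sub_of_hasDerivAt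
    (f := fun y : ℝ => -∑ j ∈ Finset.range k, (m.choose j : ℝ) * y ^ j * (1 - y) ^ (m - j))
    (f' := fun x : ℝ => (k : ℝ) * (m.choose k : ℝ) * x ^ (k - 1) * (1 - x) ^ (m - k))
    (a := θ) (b := 1)
    (fun x _ => by simpa using (hasDerivAt_binomSum m k hkm x).fun_neg)
    (by
      apply Continuous.intervalIntegrable
      fun_prop)
  rw [hftc]
  have hS1 : ∑ j ∈ Finset.range k, (m.choose j : ℝ) * (1:ℝ) ^ j * (1 - (1:ℝ)) ^ (m - j) = 0 := by
    apply Finset.sum_eq_zero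
    intro j hj
    have hj' : j < k := Finset.mem_range.mp hj
    have : m - j ≠ 0 := by omega
    simp [zero_pow this]
  simp only [hS1]
  ring

lemma binomSum_total (m : ℕ) (θ : ℝ) :
    ∑ j ∈ Finset.range (m + 1), (m.choose j : ℝ) * θ ^ j * (1 - θ) ^ (m - j) = 1 := by
  have := add_pow θ (1 - θ) m
  have h1 : θ + (1 - θ) = 1 := by ring
  rw [h1, one_pow] at this
  have h2 : ∑ j ∈ Finset.range (m + 1), (m.choose j : ℝ) * θ ^ j * (1 - θ) ^ (m - j)
      = ∑ j ∈ Finset.range (m + 1), θ ^ j * (1 - θ) ^ (m - j) * (m.choose j : ℝ) := by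
    apply Finset.sum_congr rfl
    intro j _
    ring
  rw [h2, ← this]

lemma binji (m k : ℕ) (hkm : k ≤ m) (θ : ℝ) :
    ∑ q ∈ Finset.Icc k m, (m.choose q : ℝ) * θ ^ q * (1 - θ) ^ (m - q)
      = 1 - ∑ j ∈ Finset.range k, (m.choose j : ℝ) * θ ^ j * (1 - θ) ^ (m - j) := by
  have hsplit : (∑ j ∈ Finset.range k, (m.choose j : ℝ) * θ ^ j * (1 - θ) ^ (m - j))
      + ∑ q ∈ Finset.Icc k m, (m.choose q : ℝ) * θ ^ q * (1 - θ) ^ (m - q)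
      = ∑ j ∈ Finset.range (m + 1), (m.choose j : ℝ) * θ ^ j * (1 - θ) ^ (m - j) := by
    rw [Finset.range_eq_Ico, Finset.range_eq_Ico, ← Finset.Ico_add_one_right_eq_Icc k m]
    exact Finset.sum_Ico_consecutive (fun j => (m.choose j : ℝ) * θ ^ j * (1 - θ) ^ (m - j)) (Nat.zero_le k) (by omega)
  rw [binomSum_total] at hsplit
  linarith

lemma core_pointwise (m k : ℕ) (hk1 : 1 ≤ k) (hkm : k < m) {p x : ℝ}
    (hp : p = (k : ℝ) / m) (hpx : p < x) (hx1 : x < 1) {c : ℝ} (hc : c ≤ 0)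
    (hcx : 0 ≤ c + Real.sqrt (2 * m * KLf p x)) :
    (k : ℝ) * (m.choose k : ℝ) * x ^ (k - 1) * (1 - x) ^ (m - k)
      ≤ gaussPDF (c + Real.sqrt (2 * m * KLf p x))
        * ((m : ℝ) * (x - p) / (x * (1 - x) * Real.sqrt (2 * m * KLf p x))) := by
  have hm0 : (0:ℝ) < m := by
    have : (0:ℕ) < m := lt_of_le_of_lt (Nat.zero_le k) hkm
    exact_mod_cast this
  have hk0 : (0:ℝ) < k := by exact_mod_cast hk1
  have hp0 : 0 < p := by rw [hp]; positivity
  have hx0 : 0 < x := lt_trans hp0 hpx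
  have h1x : (0:ℝ) < 1 - x := by linarith
  have hKL : 0 < KLf p x := by
    have := klf_lower hp0 hpx.le hx1
    have h2 : 0 < (x - p) ^ 2 / (2 * x) := div_pos (pow_pos (sub_pos.mpr hpx) 2) (by linarith)
    linarith
  have hb0 : 0 < Real.sqrt (2 * m * KLf p x) := Real.sqrt_pos.mpr (by positivity)
  have hmp : (m:ℝ) * p = k := by rw [hp]; field_simp
  have hmq : (m:ℝ) * (1 - p) = ((m - k : ℕ) : ℝ) := by
    rw [hp, Nat.cast_sub hkm.le]
    field_simp
  have hp1 : p < 1 := lt_trans hpx hx1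
  -- the identity x^k (1-x)^(m-k) = p^k (1-p)^(m-k) exp(-(m KL))
  have hiden : x ^ k * (1 - x) ^ (m - k)
      = p ^ k * (1 - p) ^ (m - k) * Real.exp (-((m:ℝ) * KLf p x)) := by
    have he : Real.exp (-((m:ℝ) * KLf p x))
        = (x / p) ^ k * ((1 - x) / (1 - p)) ^ (m - k) := by
      have h1 : -((m:ℝ) * KLf p x)
          = (k:ℝ) * (Real.log x - Real.log p)
            + ((m - k : ℕ):ℝ) * (Real.log (1 - x) - Real.log (1 - p)) := by
        unfold KLf
        rw [← hmp, ← hmq]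
        ring
      rw [h1, Real.exp_add, Real.exp_nat_mul, Real.exp_nat_mul,
        Real.exp_sub, Real.exp_sub, Real.exp_log hx0, Real.exp_log hp0,
        Real.exp_log h1x, Real.exp_log (by linarith : (0:ℝ) < 1 - p)]
    rw [he]
    rw [show p ^ k * (1 - p) ^ (m - k) * ((x / p) ^ k * ((1 - x) / (1 - p)) ^ (m - k))
        = (p * (x / p)) ^ k * ((1 - p) * ((1 - x) / (1 - p))) ^ (m - k) from by
      rw [mul_pow, mul_pow]; ring]
    rw [mul_div_cancel₀ x (ne_of_gt hp0), mul_div_cancel₀ (1 - x) (by linarith : (1:ℝ) - p ≠ 0)]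
  -- main scalar inequality (hMAIN)
  have hZ : (0:ℝ) ≤ (m.choose k : ℝ) * p ^ k * (1 - p) ^ (m - k) :=
    mul_nonneg (mul_nonneg (Nat.cast_nonneg _) (pow_nonneg hp0.le _))
      (pow_nonneg (by linarith) _)
  have hSt := choose_sq_bound hk1 hkm
  have hqc : ((m - k : ℕ) : ℝ) / m = 1 - p := by
    rw [← hmq]; field_simp
  have hpc : (k : ℝ) / m = p := hp.symm
  rw [hqc, hpc] at hSt
  have hKey := klf_key hp0 hpx.le hx1
  set Z := (m.choose k : ℝ) * p ^ k * (1 - p) ^ (m - k) with hZdef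
  set a := Real.sqrt (2 * Real.pi) with hadef
  set b := Real.sqrt (2 * m * KLf p x) with hbdef
  have ha2 : a ^ 2 = 2 * Real.pi := Real.sq_sqrt (by positivity)
  have hb2 : b ^ 2 = 2 * m * KLf p x := Real.sq_sqrt (by positivity)
  have ha0 : 0 < a := Real.sqrt_pos.mpr (by positivity)
  have hmk : (0:ℝ) < (m:ℝ) - k := by
    have : (k:ℝ) < m := by exact_mod_cast hkm
    linarith
  have hmkc : ((m - k : ℕ) : ℝ) = (m:ℝ) - k := Nat.cast_sub hkm.le
  rw [hmkc] at hSt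
  have hMAIN : (k:ℝ) * Z * a * ((1 - x) * b) ≤ (m:ℝ) * (x - p) := by
    have hL0 : 0 ≤ (k:ℝ) * Z * a * ((1 - x) * b) := by positivity
    have hR0 : 0 ≤ (m:ℝ) * (x - p) := mul_nonneg hm0.le (by linarith)
    have hsq : ((k:ℝ) * Z * a * ((1 - x) * b)) ^ 2 ≤ ((m:ℝ) * (x - p)) ^ 2 := by
      have hN1 : (0:ℝ) ≤ 2 * m * k * (1 - x) ^ 2 * KLf p x := by positivity
      have h1 : (Z ^ 2 * (2 * Real.pi * k * ((m:ℝ) - k))) * (2 * m * k * (1 - x) ^ 2 * KLf p x)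
          ≤ (m:ℝ) * (2 * m * k * (1 - x) ^ 2 * KLf p x) :=
        mul_le_mul_of_nonneg_right hSt hN1
      have h2' : 2 * (k:ℝ) * m * (1 - x) ^ 2 * KLf p x ≤ (m:ℝ) * ((m:ℝ) - k) * (x - p) ^ 2 := by
        have h3 := mul_le_mul_of_nonneg_left hKey (by positivity : (0:ℝ) ≤ (m:ℝ) ^ 2)
        calc 2 * (k:ℝ) * m * (1 - x) ^ 2 * KLf p x
            = (m:ℝ) ^ 2 * (2 * p * (1 - x) ^ 2 * KLf p x) := by rw [← hmp]; ring
          _ ≤ (m:ℝ) ^ 2 * ((1 - p) * (x - p) ^ 2) := h3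
          _ = (m:ℝ) * ((m:ℝ) * (1 - p)) * (x - p) ^ 2 := by ring
          _ = (m:ℝ) * ((m:ℝ) - k) * (x - p) ^ 2 := by rw [hmq, hmkc]
      have hT : ((k:ℝ) * Z * a * ((1 - x) * b)) ^ 2 * ((m:ℝ) - k)
          ≤ ((m:ℝ) * (x - p)) ^ 2 * ((m:ℝ) - k) := by
        calc ((k:ℝ) * Z * a * ((1 - x) * b)) ^ 2 * ((m:ℝ) - k)
            = (k:ℝ) ^ 2 * Z ^ 2 * (1 - x) ^ 2 * ((m:ℝ) - k) * (a ^ 2 * b ^ 2) := by ring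
          _ = (k:ℝ) ^ 2 * Z ^ 2 * (1 - x) ^ 2 * ((m:ℝ) - k)
              * ((2 * Real.pi) * (2 * m * KLf p x)) := by rw [ha2, hb2]
          _ = (Z ^ 2 * (2 * Real.pi * k * ((m:ℝ) - k))) * (2 * m * k * (1 - x) ^ 2 * KLf p x) := by
              ring
          _ ≤ (m:ℝ) * (2 * m * k * (1 - x) ^ 2 * KLf p x) := h1
          _ = (m:ℝ) * (2 * (k:ℝ) * m * (1 - x) ^ 2 * KLf p x) := by ring
          _ ≤ (m:ℝ) * ((m:ℝ) * ((m:ℝ) - k) * (x - p) ^ 2) :=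
              mul_le_mul_of_nonneg_left h2' hm0.le
          _ = ((m:ℝ) * (x - p)) ^ 2 * ((m:ℝ) - k) := by ring
      exact le_of_mul_le_mul_right hT hmk
    calc (k:ℝ) * Z * a * ((1 - x) * b) = Real.sqrt (((k:ℝ) * Z * a * ((1 - x) * b)) ^ 2) :=
          (Real.sqrt_sq hL0).symm
      _ ≤ Real.sqrt (((m:ℝ) * (x - p)) ^ 2) := Real.sqrt_le_sqrt hsq
      _ = (m:ℝ) * (x - p) := Real.sqrt_sq hR0
  -- gaussian density lower bound at c + b
  have hgauss : Real.exp (-((m:ℝ) * KLf p x)) / a ≤ gaussPDF (c + b) := by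
    unfold gaussPDF
    have hub : c + b ≤ b := by linarith
    have hub2 : (c + b) ^ 2 ≤ b ^ 2 := pow_le_pow_left₀ hcx hub 2
    have hexp : -((m:ℝ) * KLf p x) ≤ -(c + b) ^ 2 / 2 := by
      rw [hb2] at hub2
      linarith
    rw [div_eq_inv_mul]
    exact mul_le_mul_of_nonneg_left (Real.exp_le_exp.mpr hexp) (by positivity)
  have hfrac0 : 0 ≤ (m:ℝ) * (x - p) / (x * (1 - x) * b) := by
    exact div_nonneg (mul_nonneg hm0.le (by linarith)) (mul_pos (mul_pos hx0 h1x) hb0).le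
  have hxp : x ^ (k - 1) * x = x ^ k := by
    rw [← pow_succ]
    congr 1
    omega
  have step1 : (k : ℝ) * (m.choose k : ℝ) * x ^ (k - 1) * (1 - x) ^ (m - k)
      ≤ Real.exp (-((m:ℝ) * KLf p x)) / a * ((m:ℝ) * (x - p) / (x * (1 - x) * b)) := by
    rw [div_mul_div_comm, le_div_iff₀ (by positivity)]
    calc (k : ℝ) * (m.choose k : ℝ) * x ^ (k - 1) * (1 - x) ^ (m - k) * (a * (x * (1 - x) * b))
        = (k : ℝ) * (m.choose k : ℝ) * (x ^ (k - 1) * x) * (1 - x) ^ (m - k)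
          * ((1 - x) * a * b) := by ring
      _ = (k : ℝ) * (m.choose k : ℝ) * (x ^ k * (1 - x) ^ (m - k)) * ((1 - x) * a * b) := by
          rw [hxp]; ring
      _ = (k : ℝ) * (m.choose k : ℝ)
          * (p ^ k * (1 - p) ^ (m - k) * Real.exp (-((m:ℝ) * KLf p x)))
          * ((1 - x) * a * b) := by rw [hiden]
      _ = ((k:ℝ) * Z * a * ((1 - x) * b)) * Real.exp (-((m:ℝ) * KLf p x)) := by
          rw [hZdef]; ring
      _ ≤ ((m:ℝ) * (x - p)) * Real.exp (-((m:ℝ) * KLf p x)) :=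
          mul_le_mul_of_nonneg_right hMAIN (Real.exp_nonneg _)
      _ = Real.exp (-((m:ℝ) * KLf p x)) * ((m:ℝ) * (x - p)) := by ring
  calc (k : ℝ) * (m.choose k : ℝ) * x ^ (k - 1) * (1 - x) ^ (m - k)
      ≤ Real.exp (-((m:ℝ) * KLf p x)) / a * ((m:ℝ) * (x - p) / (x * (1 - x) * b)) := step1
    _ ≤ gaussPDF (c + b) * ((m:ℝ) * (x - p) / (x * (1 - x) * b)) :=
        mul_le_mul_of_nonneg_right hgauss hfrac0

lemma key_estimate (m k : ℕ) (θ : ℝ) (hθ0 : 0 < θ) (hθ1 : θ < 1) (hk1 : 1 ≤ k) (hkm : k < m)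
    (hk : (k : ℝ) ≤ m * θ) :
    (∫ x in θ..1, (k : ℝ) * (m.choose k : ℝ) * x ^ (k - 1) * (1 - x) ^ (m - k))
      ≤ gaussTail (((m : ℝ) * θ - k) / Real.sqrt ((m : ℝ) * θ)) := by
  have hm0 : (0:ℝ) < m := by
    have : (0:ℕ) < m := lt_of_le_of_lt (Nat.zero_le k) hkm
    exact_mod_cast this
  have hk0 : (0:ℝ) < k := by exact_mod_cast hk1
  set p : ℝ := (k : ℝ) / m with hpdef
  have hp0 : 0 < p := div_pos hk0 hm0
  have hpθ : p ≤ θ := by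
    rw [hpdef, div_le_iff₀ hm0]
    linarith
  have hmp : (m:ℝ) * p = k := by rw [hpdef]; field_simp
  set s : ℝ := ((m : ℝ) * θ - k) / Real.sqrt ((m : ℝ) * θ) with hsdef
  have hs0 : 0 ≤ s := div_nonneg (by linarith) (Real.sqrt_nonneg _)
  have hKLθ0 : 0 ≤ KLf p θ := by
    have := klf_lower hp0 hpθ hθ1
    have h2 : 0 ≤ (θ - p) ^ 2 / (2 * θ) := by positivity
    linarith
  have hs2 : s ^ 2 ≤ 2 * m * KLf p θ := by
    have he : s ^ 2 = (m : ℝ) * (θ - p) ^ 2 / θ := by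
      rw [hsdef, div_pow, Real.sq_sqrt (by positivity : (0:ℝ) ≤ (m:ℝ) * θ)]
      rw [show (m:ℝ) * θ - k = (m:ℝ) * (θ - p) from by rw [← hmp]; ring]
      field_simp
      
    have h3 := mul_le_mul_of_nonneg_left (klf_lower hp0 hpθ hθ1)
      (by positivity : (0:ℝ) ≤ 2 * m)
    have h4 : 2 * (m:ℝ) * ((θ - p) ^ 2 / (2 * θ)) = (m:ℝ) * (θ - p) ^ 2 / θ := by
      field_simp
      
    rw [h4] at h3
    linarith [he ▸ h3]
  set c : ℝ := s - Real.sqrt (2 * m * KLf p θ) with hcdef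
  have hc : c ≤ 0 := by
    have h1 : s = Real.sqrt (s ^ 2) := (Real.sqrt_sq hs0).symm
    have h2 : Real.sqrt (s ^ 2) ≤ Real.sqrt (2 * m * KLf p θ) := Real.sqrt_le_sqrt hs2
    rw [hcdef]
    linarith [h1 ▸ h2]
  have hscle : s ≤ Real.sqrt (2 * m * KLf p θ) := by linarith [hc]
  -- continuity of gaussTail and the primitive
  have hgtc : Continuous gaussTail := by
    rw [continuous_iff_continuousAt]
    exact fun y => (hasDerivAt_gaussTail y).continuousAt
  have hf1c : Continuous (fun x : ℝ => (k : ℝ) * (m.choose k : ℝ) * x ^ (k - 1) * (1 - x) ^ (m - k)) := by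
    fun_prop
  have hP : ∀ x : ℝ, HasDerivAt
      (fun y => ∫ t in θ..y, (k : ℝ) * (m.choose k : ℝ) * t ^ (k - 1) * (1 - t) ^ (m - k))
      ((k : ℝ) * (m.choose k : ℝ) * x ^ (k - 1) * (1 - x) ^ (m - k)) x :=
    fun x => (hf1c.integral_hasStrictDerivAt θ x).hasDerivAt
  have hPc : Continuous
      (fun y => ∫ t in θ..y, (k : ℝ) * (m.choose k : ℝ) * t ^ (k - 1) * (1 - t) ^ (m - k)) := by
    rw [continuous_iff_continuousAt]
    exact fun y => (hP y).continuousAt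
  -- sqrt(2 m KL) facts on (θ, 1)
  have hKLx : ∀ x : ℝ, θ < x → x < 1 → 0 < KLf p x := by
    intro x hx1 hx2
    have hle := klf_lower hp0 (le_of_lt (lt_of_le_of_lt hpθ hx1)) hx2
    have : 0 < (x - p) ^ 2 / (2 * x) := by
      have hxp : p < x := lt_of_le_of_lt hpθ hx1
      have h0x : 0 < x := lt_trans hp0 hxp
      exact div_pos (pow_pos (sub_pos.mpr hxp) 2) (by linarith)
    linarith
  have hux0 : ∀ x : ℝ, θ < x → x < 1 → 0 ≤ c + Real.sqrt (2 * m * KLf p x) := by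
    intro x hx1 hx2
    have hmono := klf_mono hp0 hpθ hx1.le hx2
    have h2 : Real.sqrt (2 * m * KLf p θ) ≤ Real.sqrt (2 * m * KLf p x) :=
      Real.sqrt_le_sqrt (by nlinarith)
    rw [hcdef]
    linarith
  have hu' : ∀ x : ℝ, θ < x → x < 1 →
      HasDerivAt (fun y => c + Real.sqrt (2 * m * KLf p y))
        ((m:ℝ) * (x - p) / (x * (1 - x) * Real.sqrt (2 * m * KLf p x))) x := by
    intro x hx1 hx2
    have h0x : 0 < x := lt_trans hθ0 hx1
    have hKL := hKLx x hx1 hx2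
    have hne : 2 * (m:ℝ) * KLf p x ≠ 0 := by positivity
    have hin : HasDerivAt (fun y : ℝ => 2 * (m:ℝ) * KLf p y)
        (2 * (m:ℝ) * ((x - p) / (x * (1 - x)))) x :=
      (hasDerivAt_KLf p h0x hx2).const_mul (2 * (m:ℝ))
    have hsq := (Real.hasDerivAt_sqrt hne).comp x hin
    have := hsq.const_add c
    convert this using 1
    · rfl
    · rfl
    · rfl
    have hb0 : 0 < Real.sqrt (2 * m * KLf p x) := Real.sqrt_pos.mpr (by positivity)
    have h1x : (0:ℝ) < 1 - x := by linarith
    field_simp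
    
  -- the monotone comparison up to x₁ < 1
  have hmain2 : ∀ x₁ : ℝ, θ ≤ x₁ → x₁ < 1 →
      (∫ t in θ..x₁, (k : ℝ) * (m.choose k : ℝ) * t ^ (k - 1) * (1 - t) ^ (m - k))
        ≤ gaussTail s := by
    intro x₁ ha hb
    have hD := mono_helper (a := θ) (b := x₁)
      (f := fun x => gaussTail s - gaussTail (c + Real.sqrt (2 * m * KLf p x))
        - ∫ t in θ..x, (k : ℝ) * (m.choose k : ℝ) * t ^ (k - 1) * (1 - t) ^ (m - k))
      (f' := fun x => gaussPDF (c + Real.sqrt (2 * m * KLf p x))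
          * ((m:ℝ) * (x - p) / (x * (1 - x) * Real.sqrt (2 * m * KLf p x)))
        - (k : ℝ) * (m.choose k : ℝ) * x ^ (k - 1) * (1 - x) ^ (m - k))
      ha
      (by
        apply ContinuousOn.sub
        apply ContinuousOn.sub continuousOn_const
        · apply hgtc.comp_continuousOn
          apply ContinuousOn.add continuousOn_const
          apply Real.continuous_sqrt.comp_continuousOn
          exact continuousOn_const.mul (klf_continuousOn hθ0 hb)
        · exact hPc.continuousOn)
      (by
        intro t ht
        have h1 := (hasDerivAt_gaussTail (c + Real.sqrt (2 * m * KLf p t))).comp t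
          (hu' t ht.1 (lt_trans ht.2 hb))
        have h2 := (h1.const_sub (gaussTail s)).fun_sub (hP t)
        convert h2 using 1
        · rfl
        · rfl
        · rfl
        ring)
      (by
        intro t ht
        have := core_pointwise m k hk1 hkm hpdef (lt_of_le_of_lt hpθ ht.1)
          (lt_trans ht.2 hb) hc (hux0 t ht.1 (lt_trans ht.2 hb))
        linarith)
    have huθ : c + Real.sqrt (2 * m * KLf p θ) = s := by rw [hcdef]; ring

    rw [huθ, intervalIntegral.integral_same] at hD
    simp only [sub_self, sub_zero] at hD
    have hgt0 := gaussTail_nonneg (c + Real.sqrt (2 * m * KLf p x₁))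
    linarith
  -- epsilon finish
  apply le_of_forall_pos_le_add
  intro ε hε
  set M : ℝ := (k : ℝ) * (m.choose k : ℝ) + 1 with hMdef
  have hM0 : 0 < M := by positivity
  set x₁ : ℝ := max θ (1 - ε / M) with hx₁def
  have hθx₁ : θ ≤ x₁ := le_max_left _ _
  have hx₁1 : x₁ < 1 := max_lt hθ1 (by
    have : 0 < ε / M := div_pos hε hM0
    linarith)
  have hi1 : IntervalIntegrable
      (fun x : ℝ => (k : ℝ) * (m.choose k : ℝ) * x ^ (k - 1) * (1 - x) ^ (m - k)) volume θ x₁ :=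
    hf1c.intervalIntegrable _ _
  have hi2 : IntervalIntegrable
      (fun x : ℝ => (k : ℝ) * (m.choose k : ℝ) * x ^ (k - 1) * (1 - x) ^ (m - k)) volume x₁ 1 :=
    hf1c.intervalIntegrable _ _
  have hsplit := intervalIntegral.integral_add_adjacent_intervals hi1 hi2
  have htail : (∫ x in x₁..1, (k : ℝ) * (m.choose k : ℝ) * x ^ (k - 1) * (1 - x) ^ (m - k))
      ≤ ε := by
    have hbound : ∀ t ∈ Set.Icc x₁ 1,
        (k : ℝ) * (m.choose k : ℝ) * t ^ (k - 1) * (1 - t) ^ (m - k)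
          ≤ (k : ℝ) * (m.choose k : ℝ) := by
      intro t ht
      have ht0 : 0 ≤ t := le_trans (le_trans hθ0.le hθx₁) ht.1
      have ht1 : t ≤ 1 := ht.2
      have hp1 : t ^ (k - 1) ≤ 1 := pow_le_one₀ ht0 ht1
      have hp2 : (1 - t) ^ (m - k) ≤ 1 := pow_le_one₀ (by linarith) (by linarith)
      have h1' : 0 ≤ t ^ (k - 1) := pow_nonneg ht0 _
      have h2' : 0 ≤ (1 - t) ^ (m - k) := pow_nonneg (by linarith) _
      have hkC : (0:ℝ) ≤ (k : ℝ) * (m.choose k : ℝ) := by positivity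
      calc (k : ℝ) * (m.choose k : ℝ) * t ^ (k - 1) * (1 - t) ^ (m - k)
          ≤ (k : ℝ) * (m.choose k : ℝ) * 1 * (1 - t) ^ (m - k) := by
            apply mul_le_mul_of_nonneg_right _ h2'
            exact mul_le_mul_of_nonneg_left hp1 hkC
        _ ≤ (k : ℝ) * (m.choose k : ℝ) * 1 * 1 := by
            apply mul_le_mul_of_nonneg_left hp2 (by positivity)
        _ = (k : ℝ) * (m.choose k : ℝ) := by ring
    have hmono := intervalIntegral.integral_mono_on hx₁1.le hi2
      (intervalIntegrable_const) hbound
    rw [intervalIntegral.integral_const] at hmono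
    have h1x₁ : 1 - x₁ ≤ ε / M := by
      have := le_max_right θ (1 - ε / M)
      rw [← hx₁def] at this
      linarith
    calc (∫ x in x₁..1, (k : ℝ) * (m.choose k : ℝ) * x ^ (k - 1) * (1 - x) ^ (m - k))
        ≤ (1 - x₁) • ((k : ℝ) * (m.choose k : ℝ)) := hmono
      _ = (1 - x₁) * ((k : ℝ) * (m.choose k : ℝ)) := by rw [smul_eq_mul]
      _ ≤ (ε / M) * M := by
          apply mul_le_mul h1x₁ (by rw [hMdef]; linarith) (by positivity) (by positivity)
      _ = ε := by field_simp
  have hfirst := hmain2 x₁ hθx₁ hx₁1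
  linarith [hsplit, htail, hfirst]

/-- Slud's inequality: if k ≤ mθ then
P(X ≥ k) ≥ 1 - Φ((k - mθ)/√(mθ)). -/
theorem slud_inequality (m k : ℕ) (θ : ℝ) (hθ : θ ∈ Set.Ioo (0 : ℝ) 1)
    (hk : (k : ℝ) ≤ m * θ) (hkm : k ≤ m) :
    gaussTail (((k : ℝ) - m * θ) / Real.sqrt (m * θ)) ≤
      ∑ q ∈ Finset.Icc k m, (m.choose q : ℝ) * θ ^ q * (1 - θ) ^ (m - q) := by
  obtain ⟨hθ0, hθ1⟩ := hθ
  rw [binji m k hkm θ]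
  rcases Nat.eq_zero_or_pos k with hk0 | hk1
  · subst hk0
    simp only [Finset.range_zero, Finset.sum_empty, sub_zero]
    exact gaussTail_le_one _
  · have hklt : k < m := by
      rcases lt_or_eq_of_le hkm with h | h
      · exact h
      · exfalso
        subst h
        have hm0 : (0:ℝ) < k := by exact_mod_cast hk1
        nlinarith
    rw [binomSum_eq_integral hk1 hkm θ]
    have hkey := key_estimate m k θ hθ0 hθ1 hk1 hklt hk
    have hz : ((k : ℝ) - m * θ) / Real.sqrt (m * θ)
        = -(((m : ℝ) * θ - k) / Real.sqrt ((m : ℝ) * θ)) := by ring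
    rw [hz, gaussTail_neg]
    linarith
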